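/- arXiv:1907.08901 — 2 statements merged into one kernel-verified Lean document; each statement's English description precedes it below -/
import Mathlib

section
/- For complex numbers z_j = a_j + i b_j (j = 1,2,3) with a_j, b_j real and b_1^2 + b_2^2 + b_3^2 > 0, the principal branch square root satisfies Re[(z_1^2 + z_2^2 + z_3^2)^{1/2}] ≥ |a_1 b_1 + a_2 b_2 + a_3 b_3| / sqrt(b_1^2 + b_2^2 + b_3^2). -/
open Complex

/-- For `z_j = a_j + i b_j` with `b₁² + b₂² + b₃² > 0`, the principal square root
(with nonnegative real part) satisfies
`Re[(z₁² + z₂² + z₃²)^{1/2}] ≥ |a·b| / √(b·b)`. -/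
theorem stmt0 (a b : Fin 3 → ℝ) (hb : 0 < ∑ j, (b j) ^ 2) :
    |∑ j, a j * b j| / Real.sqrt (∑ j, (b j) ^ 2) ≤
      ((∑ j, ((a j : ℂ) + (b j : ℂ) * Complex.I) ^ 2) ^ ((1 : ℂ) / 2)).re := by
  set A : ℝ := ∑ j, (a j) ^ 2 with hA
  set B : ℝ := ∑ j, (b j) ^ 2 with hBdef
  set p : ℝ := ∑ j, a j * b j with hp
  set S : ℂ := ∑ j, ((a j : ℂ) + (b j : ℂ) * Complex.I) ^ 2 with hS
  have hSre : S.re = A - B := by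
    simp [hS, hA, hBdef, Fin.sum_univ_three, pow_two, Complex.add_re, Complex.add_im,
      Complex.mul_re, Complex.mul_im]
    ring
  have hSim : S.im = 2 * p := by
    simp [hS, hp, Fin.sum_univ_three, pow_two, Complex.add_re, Complex.add_im,
      Complex.mul_re, Complex.mul_im]
    ring
  set w : ℂ := S ^ ((1 : ℂ) / 2) with hw
  -- w squared is S
  have hwsq : w ^ 2 = S := by
    have := Complex.cpow_nat_inv_pow S (n := 2) two_ne_zero
    simpa [hw, one_div] using this
  -- Re w ≥ 0
  have hwre : 0 ≤ w.re := by
    rcases eq_or_ne S 0 with h0 | h0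
    · simp [hw, h0, Complex.zero_cpow (by norm_num : (1:ℂ)/2 ≠ 0)]
    · rw [hw, Complex.cpow_def_of_ne_zero h0, Complex.exp_re]
      have him : (Complex.log S * ((1:ℂ)/2)).im = S.arg / 2 := by
        simp [Complex.mul_im, Complex.log_re, Complex.log_im]
        ring
      rw [him]
      have h1 : -(Real.pi / 2) ≤ S.arg / 2 := by
        have := Complex.neg_pi_lt_arg S; linarith
      have h2 : S.arg / 2 ≤ Real.pi / 2 := by
        have := Complex.arg_le_pi S; linarith
      exact mul_nonneg (Real.exp_pos _).le
        (Real.cos_nonneg_of_mem_Icc ⟨h1, h2⟩)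
  -- modulus relation
  have habs : w.re ^ 2 + w.im ^ 2 = Real.sqrt ((A - B) ^ 2 + (2 * p) ^ 2) := by
    have h1 : ‖w‖ ^ 2 = ‖S‖ := by
      rw [← norm_pow, hwsq]
    have h2 : ‖w‖ ^ 2 = w.re ^ 2 + w.im ^ 2 := by
      rw [Complex.sq_norm, Complex.normSq_apply]; ring
    have h3 : ‖S‖ = Real.sqrt ((A - B) ^ 2 + (2 * p) ^ 2) := by
      rw [Complex.norm_def, Complex.normSq_apply, hSre, hSim]; ring_nf
    rw [← h2, h1, h3]
  have hresq : w.re ^ 2 - w.im ^ 2 = A - B := by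
    have : (w ^ 2).re = S.re := by rw [hwsq]
    simpa [pow_two, Complex.mul_re, hSre] using this
  set M : ℝ := Real.sqrt ((A - B) ^ 2 + (2 * p) ^ 2) with hM
  have hMnn : 0 ≤ M := Real.sqrt_nonneg _
  have hMsq : M ^ 2 = (A - B) ^ 2 + (2 * p) ^ 2 :=
    Real.sq_sqrt (by positivity)
  have h2r : 2 * w.re ^ 2 = M + (A - B) := by linarith
  -- Cauchy-Schwarz
  have hCS : p ^ 2 ≤ A * B := by
    simpa [hp, hA, hBdef] using Finset.sum_mul_sq_le_sq_mul_sq Finset.univ a b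
  -- key: p^2 ≤ B * w.re^2
  have hkey : p ^ 2 ≤ B * w.re ^ 2 := by
    have hBM : 2 * p ^ 2 - A * B + B ^ 2 ≤ B * M := by
      nlinarith [sq_nonneg (B * M - (2 * p ^ 2 - A * B + B ^ 2)), sq_nonneg (B * M),
        mul_pos hb hb, mul_nonneg hb.le hMnn, sq_nonneg p, sq_nonneg (A - B)]
    nlinarith
  -- conclude
  rw [div_le_iff₀ (Real.sqrt_pos.mpr hb)]
  have hsq : |p| ^ 2 ≤ (w.re * Real.sqrt B) ^ 2 := by
    rw [mul_pow, Real.sq_sqrt hb.le, _root_.sq_abs]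
    nlinarith [hkey]
  have h0 : 0 ≤ w.re * Real.sqrt B := mul_nonneg hwre (Real.sqrt_nonneg _)
  have := Real.sqrt_le_sqrt hsq
  simpa [Real.sqrt_sq_eq_abs, Real.sqrt_sq h0, _root_.abs_abs] using this
end

section
/- Let s = s_1 + i s_2 with s_1 > 0, ε, μ > 0, and Φ_s(x,y) = e^{−√(εμ)s|x−y|}/(4π|x−y|). Then the mixed second partial derivative satisfies the decomposition ∂²Φ_s/∂y_i∂y_j = s² Q_{2,ij} + s Q_{1,ij} + Q_{0,ij}, where Q_{2,ij} = εμ (x_i−y_i)(x_j−y_j)/|x−y|² · Φ_s, and each Q_{l,ij} (l=0,1,2) satisfies the bound |Q_{l,ij}| ≤ C (1 + |x−y|^{-1} + |x−y|^{-2}) e^{−√(εμ)s_1|x−y|}/(4π|x−y|) for a constant C depending only on ε, μ. -/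
open Complex

/-- Euclidean norm on `ℝ³` (as `Fin 3 → ℝ`). -/
noncomputable def enorm3 (x : Fin 3 → ℝ) : ℝ := Real.sqrt (∑ i, (x i) ^ 2)

/-- The fundamental solution `Φ_s(x,y) = e^{-√(εμ) s |x-y|} / (4π|x-y|)`. -/
noncomputable def phiS (ε μ : ℝ) (s : ℂ) (x y : Fin 3 → ℝ) : ℂ :=
  Complex.exp (-(Real.sqrt (ε * μ) : ℂ) * s * (enorm3 (x - y) : ℂ)) /
    (4 * (Real.pi : ℂ) * (enorm3 (x - y) : ℂ))

open Function Finset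

lemma enorm3_sub_eq (x z : Fin 3 → ℝ) : enorm3 (x - z) = Real.sqrt (∑ l, (x l - z l)^2) := by
  simp [enorm3]

lemma sum_sq_pos {x z : Fin 3 → ℝ} (h : x ≠ z) : 0 < ∑ l, (x l - z l)^2 := by
  obtain ⟨l, hl⟩ := Function.ne_iff.mp h
  exact Finset.sum_pos' (fun i _ => sq_nonneg _)
    ⟨l, Finset.mem_univ l, by have : x l - z l ≠ 0 := sub_ne_zero.mpr hl; positivity⟩

lemma enorm3_update (x z : Fin 3 → ℝ) (j : Fin 3) (t : ℝ) :
    enorm3 (x - Function.update z j t) =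
      Real.sqrt ((∑ l ∈ Finset.univ.erase j, (x l - z l)^2) + (x j - t)^2) := by
  rw [enorm3_sub_eq]
  congr 1
  have : (fun l => (x l - Function.update z j t l)^2)
      = Function.update (fun l => (x l - z l)^2) j ((x j - t)^2) := by
    funext l
    rcases eq_or_ne l j with rfl | hl
    · simp
    · simp [Function.update_apply, hl]
  rw [show ∑ l, (x l - Function.update z j t l)^2 = ∑ l, Function.update (fun l => (x l - z l)^2) j ((x j - t)^2) l from by rw [this]]
  rw [Finset.sum_update_of_mem (Finset.mem_univ j), ← Finset.erase_eq]
  ring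

lemma hasDerivAt_sqrtfun (B b t₀ : ℝ) (h : 0 < B + (b - t₀)^2) :
    HasDerivAt (fun t => Real.sqrt (B + (b - t)^2))
      ((t₀ - b) / Real.sqrt (B + (b - t₀)^2)) t₀ := by
  have h1 : HasDerivAt (fun t : ℝ => B + (b - t)^2) (2*(t₀ - b)) t₀ := by
    have h0 : HasDerivAt (fun t : ℝ => (b - t)^2) (2 * (b - t₀) ^ 1 * (-1)) t₀ :=
      ((hasDerivAt_id t₀).const_sub b).pow 2
    have := h0.const_add B
    exact this.congr_deriv (by ring)
  have h2 := (Real.hasDerivAt_sqrt h.ne').comp t₀ h1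
  refine h2.congr_deriv ?_
  field_simp

lemma hasDerivAt_phi_shape (c' : ℂ) (ρ : ℝ → ℝ) (ρ' t₀ : ℝ) (hρ : HasDerivAt ρ ρ' t₀)
    (hpos : 0 < ρ t₀) :
    HasDerivAt (fun t => Complex.exp (c' * (ρ t : ℂ)) / (4 * (Real.pi:ℂ) * (ρ t : ℂ)))
      (Complex.exp (c' * (ρ t₀ : ℂ)) * (ρ' : ℂ) * (c' * (ρ t₀ : ℂ) - 1) /
        (4 * (Real.pi:ℂ) * ((ρ t₀ : ℝ):ℂ)^2)) t₀ := by
  have hρC : HasDerivAt (fun t => ((ρ t : ℝ):ℂ)) ((ρ' : ℝ):ℂ) t₀ := hρ.ofReal_comp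
  have hn : HasDerivAt (fun t => Complex.exp (c' * (ρ t:ℂ)))
      (Complex.exp (c' * (ρ t₀:ℂ)) * (c' * (ρ':ℂ))) t₀ := (hρC.const_mul c').cexp
  have hd : HasDerivAt (fun t => 4*(Real.pi:ℂ)*((ρ t:ℝ):ℂ)) (4*(Real.pi:ℂ)*(ρ':ℂ)) t₀ :=
    hρC.const_mul _
  have hπ : (Real.pi:ℂ) ≠ 0 := Complex.ofReal_ne_zero.mpr Real.pi_ne_zero
  have hr0 : ((ρ t₀ : ℝ):ℂ) ≠ 0 := Complex.ofReal_ne_zero.mpr hpos.ne'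
  have hden : (4*(Real.pi:ℂ)*((ρ t₀:ℝ):ℂ)) ≠ 0 := by
    simp [hπ, hr0]
  have := hn.div hd hden
  refine this.congr_deriv ?_
  field_simp

lemma L1 (ε μ : ℝ) (s : ℂ) (x z : Fin 3 → ℝ) (h : x ≠ z) (j : Fin 3) :
    HasDerivAt (fun t' => phiS ε μ s x (Function.update z j t'))
      (Complex.exp (-(Real.sqrt (ε*μ):ℂ) * s * ((enorm3 (x-z) : ℝ):ℂ)) *
        (((z j - x j) / enorm3 (x-z) : ℝ):ℂ) *
        (-(Real.sqrt (ε*μ):ℂ) * s * ((enorm3 (x-z):ℝ):ℂ) - 1) /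
        (4 * (Real.pi:ℂ) * ((enorm3 (x-z):ℝ):ℂ)^2)) (z j) := by
  set B := ∑ l ∈ Finset.univ.erase j, (x l - z l)^2 with hB
  set ρ : ℝ → ℝ := fun t => Real.sqrt (B + (x j - t)^2) with hρdef
  have hsum : B + (x j - z j)^2 = ∑ l, (x l - z l)^2 := by
    rw [hB, add_comm]
    exact Finset.add_sum_erase Finset.univ (fun l => (x l - z l)^2) (Finset.mem_univ j)
  have hpos : 0 < B + (x j - z j)^2 := hsum ▸ sum_sq_pos h
  have hρval : ρ (z j) = enorm3 (x - z) := by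
    show Real.sqrt (B + (x j - z j)^2) = _
    rw [enorm3_sub_eq, hsum]
  have hρ : HasDerivAt ρ ((z j - x j) / ρ (z j)) (z j) :=
    hasDerivAt_sqrtfun B (x j) (z j) hpos
  have hpos' : 0 < ρ (z j) := hρval ▸ (by rw [enorm3_sub_eq]; exact Real.sqrt_pos.mpr (sum_sq_pos h))
  have key := hasDerivAt_phi_shape (-(Real.sqrt (ε*μ):ℂ) * s) ρ _ (z j) hρ hpos'
  have hfun : (fun t' => phiS ε μ s x (Function.update z j t'))
      = fun t' => Complex.exp (-(Real.sqrt (ε*μ):ℂ) * s * ((ρ t' : ℝ):ℂ)) /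
          (4 * (Real.pi:ℂ) * ((ρ t':ℝ):ℂ)) := by
    funext t'
    simp only [phiS, enorm3_update, hρdef, hB]
  rw [hfun]
  convert key using 2 <;> rw [hρval]

set_option maxHeartbeats 1000000 in
lemma main_alg (ε μ c r δ xi yi xj yj : ℝ) (s : ℂ) (hc2 : c^2 = ε*μ) (hr : r ≠ 0) :
    (((Complex.exp (-(c:ℂ) * s * (r:ℂ)) * (-(c:ℂ) * s * (((yi - xi) / r : ℝ):ℂ)) *
          (((yj - xj) / r : ℝ):ℂ) +
        Complex.exp (-(c:ℂ) * s * (r:ℂ)) *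
          (((δ * r - (yj - xj) * ((yi - xi) / r)) / r ^ 2 : ℝ):ℂ)) * (-(c:ℂ) * s * (r:ℂ) - 1) +
        Complex.exp (-(c:ℂ) * s * (r:ℂ)) * (((yj - xj) / r : ℝ):ℂ) *
          (-(c:ℂ) * s * (((yi - xi) / r : ℝ):ℂ))) * (4 * (Real.pi:ℂ) * (r:ℂ) ^ 2) -
        Complex.exp (-(c:ℂ) * s * (r:ℂ)) * (((yj - xj) / r : ℝ):ℂ) * (-(c:ℂ) * s * (r:ℂ) - 1) *
          (4 * (Real.pi:ℂ) * ((((yi - xi) / r : ℝ):ℂ) * (r:ℂ) + (r:ℂ) * (((yi - xi) / r : ℝ):ℂ)))) /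
      (4 * (Real.pi:ℂ) * (r:ℂ) ^ 2) ^ 2
    = s ^ 2 * (((ε * μ * (xi - yi) * (xj - yj) / r ^ 2 : ℝ):ℂ) *
          (Complex.exp (-(c:ℂ) * s * (r:ℂ)) / (4 * (Real.pi:ℂ) * (r:ℂ)))) +
      s * (((c * (3 * (xi - yi) * (xj - yj) / r ^ 3 - δ / r) : ℝ):ℂ) *
          (Complex.exp (-(c:ℂ) * s * (r:ℂ)) / (4 * (Real.pi:ℂ) * (r:ℂ)))) +
      ((3 * (xi - yi) * (xj - yj) / r ^ 4 - δ / r ^ 2 : ℝ):ℂ) *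
          (Complex.exp (-(c:ℂ) * s * (r:ℂ)) / (4 * (Real.pi:ℂ) * (r:ℂ))) := by
  have hπ : (Real.pi:ℂ) ≠ 0 := Complex.ofReal_ne_zero.mpr Real.pi_ne_zero
  have hrC : ((r:ℝ):ℂ) ≠ 0 := Complex.ofReal_ne_zero.mpr hr
  have hc2C : ((c:ℝ):ℂ)^2 = ((ε:ℝ):ℂ) * ((μ:ℝ):ℂ) := by exact_mod_cast hc2
  push_cast
  rw [show ((ε:ℝ):ℂ) * ((μ:ℝ):ℂ) = ((c:ℝ):ℂ)^2 from hc2C.symm]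
  rw [show ((xi:ℝ):ℂ) - ((yi:ℝ):ℂ) = -(((yi:ℝ):ℂ) - ((xi:ℝ):ℂ)) from by ring,
    show ((xj:ℝ):ℂ) - ((yj:ℝ):ℂ) = -(((yj:ℝ):ℂ) - ((xj:ℝ):ℂ)) from by ring]
  generalize ((yi:ℝ):ℂ) - ((xi:ℝ):ℂ) = ai
  generalize ((yj:ℝ):ℂ) - ((xj:ℝ):ℂ) = aj
  field_simp
  ring_nf


set_option maxHeartbeats 1000000 in
/-- Hessian estimate for `Φ_s`: the mixed second partial derivative `∂²Φ_s/∂y_i∂y_j`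
decomposes as `s²Q₂ + sQ₁ + Q₀` with
`Q₂ = εμ (x_i-y_i)(x_j-y_j)/|x-y|² · Φ_s`, and each `Q_l` (`l = 0,1,2`) bounded by
`C(1 + |x-y|⁻¹ + |x-y|⁻²) e^{-√(εμ)s₁|x-y|}/(4π|x-y|)` with `C = C(ε,μ)`. -/
theorem stmt19 (ε μ : ℝ) (hε : 0 < ε) (hμ : 0 < μ) :
    ∃ C : ℝ, 0 < C ∧
      ∀ (s : ℂ), 0 < s.re → ∀ (x y : Fin 3 → ℝ), x ≠ y → ∀ i j : Fin 3,
        ∃ Q1 Q0 : ℂ,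
          deriv (fun t =>
              deriv (fun t' =>
                  phiS ε μ s x (Function.update (Function.update y i t) j t'))
                ((Function.update y i t) j)) (y i)
            = s ^ 2 * (((ε * μ * (x i - y i) * (x j - y j) /
                  (enorm3 (x - y)) ^ 2 : ℝ) : ℂ) * phiS ε μ s x y) + s * Q1 + Q0 ∧
          ‖(((ε * μ * (x i - y i) * (x j - y j) /
                (enorm3 (x - y)) ^ 2 : ℝ) : ℂ) * phiS ε μ s x y)‖ ≤
            C * (1 + (enorm3 (x - y))⁻¹ + ((enorm3 (x - y))⁻¹) ^ 2) *
              (Real.exp (-(Real.sqrt (ε * μ)) * s.re * enorm3 (x - y)) /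
                (4 * Real.pi * enorm3 (x - y))) ∧
          ‖Q1‖ ≤
            C * (1 + (enorm3 (x - y))⁻¹ + ((enorm3 (x - y))⁻¹) ^ 2) *
              (Real.exp (-(Real.sqrt (ε * μ)) * s.re * enorm3 (x - y)) /
                (4 * Real.pi * enorm3 (x - y))) ∧
          ‖Q0‖ ≤
            C * (1 + (enorm3 (x - y))⁻¹ + ((enorm3 (x - y))⁻¹) ^ 2) *
              (Real.exp (-(Real.sqrt (ε * μ)) * s.re * enorm3 (x - y)) /
                (4 * Real.pi * enorm3 (x - y))) := by
  have hεμ : (0:ℝ) ≤ ε * μ := by positivity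
  set c := Real.sqrt (ε * μ) with hcdef
  have hc0 : 0 < c := Real.sqrt_pos.mpr (by positivity)
  refine ⟨ε * μ + 4 * c + 4, by positivity, ?_⟩
  intro s hs x y hxy i j
  have hr : 0 < enorm3 (x - y) := by
    rw [enorm3_sub_eq]; exact Real.sqrt_pos.mpr (sum_sq_pos hxy)
  set r := enorm3 (x - y) with hrdef
  set δ : ℝ := if i = j then 1 else 0 with hδdef
  have hδ0 : 0 ≤ δ := by rw [hδdef]; split <;> norm_num
  have hδ1 : δ ≤ 1 := by rw [hδdef]; split <;> norm_num
  -- basic bounds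
  have habs : ∀ l, |x l - y l| ≤ r := by
    intro l
    rw [hrdef, enorm3_sub_eq, ← Real.sqrt_sq_eq_abs]
    exact Real.sqrt_le_sqrt (Finset.single_le_sum (f := fun l => (x l - y l)^2)
      (fun i _ => sq_nonneg _) (Finset.mem_univ l))
  have habsΦ : ‖phiS ε μ s x y‖ =
      Real.exp (-c * s.re * r) / (4 * Real.pi * r) := by
    have hre : (-(c:ℂ) * s * (r:ℂ)).re = -c * s.re * r := by
      simp [Complex.mul_re, Complex.mul_im]
    rw [phiS, ← hrdef, ← hcdef, norm_div, Complex.norm_exp, hre]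
    congr 1
    simp [_root_.abs_of_pos Real.pi_pos, _root_.abs_of_pos hr]
  have hE0 : 0 ≤ Real.exp (-c * s.re * r) / (4 * Real.pi * r) := by positivity
  have hfac : (1:ℝ) ≤ 1 + r⁻¹ + (r⁻¹)^2 := by
    have : 0 < r⁻¹ := inv_pos.mpr hr
    nlinarith
  have hCpos : (0:ℝ) < ε * μ + 4 * c + 4 := by positivity
  -- the bound for a real coefficient κ
  have key : ∀ κ : ℝ, |κ| ≤ (ε * μ + 4 * c + 4) * (1 + r⁻¹ + (r⁻¹)^2) →
      ‖((κ : ℝ) : ℂ) * phiS ε μ s x y‖ ≤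
        (ε * μ + 4 * c + 4) * (1 + r⁻¹ + (r⁻¹)^2) *
          (Real.exp (-c * s.re * r) / (4 * Real.pi * r)) := by
    intro κ hκ
    rw [norm_mul, Complex.norm_real, Real.norm_eq_abs, habsΦ]
    exact mul_le_mul_of_nonneg_right hκ hE0
  refine ⟨((c * (3 * (x i - y i) * (x j - y j) / r^3 - δ / r) : ℝ) : ℂ) * phiS ε μ s x y,
          (((3 * (x i - y i) * (x j - y j) / r^4 - δ / r^2) : ℝ) : ℂ) * phiS ε μ s x y,
          ?_, ?_, ?_, ?_⟩
  · -- the derivative identity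
    set B : ℝ := ∑ l ∈ Finset.univ.erase i, (x l - y l)^2 with hB
    set ρ : ℝ → ℝ := fun t => Real.sqrt (B + (x i - t)^2) with hρdef
    have hsum : B + (x i - y i)^2 = ∑ l, (x l - y l)^2 := by
      rw [hB, add_comm]
      exact Finset.add_sum_erase Finset.univ (fun l => (x l - y l)^2) (Finset.mem_univ i)
    have hpos : 0 < B + (x i - y i)^2 := hsum ▸ sum_sq_pos hxy
    have hρ0 : ρ (y i) = r := by
      show Real.sqrt (B + (x i - y i)^2) = r
      rw [hsum, hrdef, enorm3_sub_eq]
    have hρen : ∀ t, enorm3 (x - Function.update y i t) = ρ t := by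
      intro t; rw [enorm3_update, ← hB]
    have hupd : ∀ᶠ t in nhds (y i), x ≠ Function.update y i t := by
      by_cases hoff : ∀ l, l ≠ i → x l = y l
      · have hxi : y i ≠ x i := by
          intro hcontra
          apply hxy; funext l
          by_cases hl : l = i
          · subst hl; exact hcontra.symm
          · exact hoff l hl
        filter_upwards [eventually_ne_nhds hxi] with t ht hcontra
        have h1 := congrFun hcontra i
        rw [Function.update_self] at h1
        exact ht h1.symm
      · push_neg at hoff
        obtain ⟨l, hl, hne⟩ := hoff
        refine Filter.Eventually.of_forall fun t hcontra => ?_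
        apply hne
        have h1 := congrFun hcontra l
        rwa [Function.update_of_ne hl] at h1
    have hρD : HasDerivAt ρ ((y i - x i) / r) (y i) := by
      have h := hasDerivAt_sqrtfun B (x i) (y i) hpos
      rw [show Real.sqrt (B + (x i - y i)^2) = r from by rw [hsum, hrdef, enorm3_sub_eq]] at h
      exact h
    have hρC : HasDerivAt (fun t => ((ρ t : ℝ) : ℂ)) (((y i - x i) / r : ℝ) : ℂ) (y i) :=
      hρD.ofReal_comp
    have hE : HasDerivAt (fun t => Complex.exp (-(c:ℂ) * s * ((ρ t : ℝ):ℂ)))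
        (Complex.exp (-(c:ℂ) * s * (r:ℂ)) * (-(c:ℂ) * s * (((y i - x i) / r : ℝ) : ℂ)))
        (y i) := by
      have h := (hρC.const_mul (-(c:ℂ) * s)).cexp
      simpa only [hρ0] using h
    have hu : HasDerivAt (fun t => Function.update y i t j) δ (y i) := by
      rcases eq_or_ne i j with rfl | hij
      · have hfn : (fun t => Function.update y i t i) = fun t => t := by
          funext t; rw [Function.update_self]
        rw [hfn, hδdef, if_pos rfl]
        exact hasDerivAt_id (y i)
      · have hfn : (fun t => Function.update y i t j) = fun _ => y j := by
          funext t; rw [Function.update_of_ne (Ne.symm hij)]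
        rw [hfn, hδdef, if_neg hij]
        exact hasDerivAt_const _ _
    have hm : HasDerivAt (fun t => ((Function.update y i t j - x j) / ρ t : ℝ))
        ((δ * r - (y j - x j) * ((y i - x i) / r)) / r ^ 2) (y i) := by
      have h := (hu.sub_const (x j)).div hρD (by rw [hρ0]; exact hr.ne')
      simp only [hρ0, Function.update_eq_self] at h
      exact h
    have hmC := hm.ofReal_comp
    have hq : HasDerivAt (fun t => -(c:ℂ) * s * ((ρ t : ℝ):ℂ) - 1)
        (-(c:ℂ) * s * (((y i - x i) / r : ℝ) : ℂ)) (y i) :=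
      (hρC.const_mul (-(c:ℂ) * s)).sub_const 1
    have hden : HasDerivAt (fun t => 4 * (Real.pi:ℂ) * ((ρ t : ℝ):ℂ)^2)
        (4 * (Real.pi:ℂ) * ((((y i - x i) / r : ℝ):ℂ) * (r:ℂ) + (r:ℂ) * (((y i - x i) / r : ℝ):ℂ)))
        (y i) := by
      have h := (hρC.mul hρC).const_mul (4 * (Real.pi:ℂ))
      have hfn : (fun t => 4 * (Real.pi:ℂ) * ((ρ t : ℝ):ℂ)^2)
          = (fun t => 4 * (Real.pi:ℂ) * (((ρ t : ℝ):ℂ) * ((ρ t : ℝ):ℂ))) := by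
        funext t; ring
      rw [hfn]
      simp only [hρ0] at h
      exact h
    have hdenne : (4 * (Real.pi:ℂ) * ((ρ (y i) : ℝ):ℂ)^2) ≠ 0 := by
      rw [hρ0]
      simp [Complex.ofReal_ne_zero, Real.pi_ne_zero, hr.ne']
    have hg' := ((hE.mul hmC).mul hq).div hden hdenne
    have hkey : HasDerivAt (fun t => Complex.exp (-(c:ℂ) * s * ((ρ t : ℝ):ℂ)) *
          (((Function.update y i t j - x j) / ρ t : ℝ):ℂ) *
          (-(c:ℂ) * s * ((ρ t : ℝ):ℂ) - 1) /
          (4 * (Real.pi:ℂ) * ((ρ t : ℝ):ℂ)^2)) _ (y i) := hg'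
    have heq : (fun t => deriv (fun t' =>
          phiS ε μ s x (Function.update (Function.update y i t) j t'))
          ((Function.update y i t) j)) =ᶠ[nhds (y i)] (fun t => Complex.exp (-(c:ℂ) * s * ((ρ t : ℝ):ℂ)) *
          (((Function.update y i t j - x j) / ρ t : ℝ):ℂ) *
          (-(c:ℂ) * s * ((ρ t : ℝ):ℂ) - 1) /
          (4 * (Real.pi:ℂ) * ((ρ t : ℝ):ℂ)^2)) := by
      filter_upwards [hupd] with t ht
      rw [(L1 ε μ s x (Function.update y i t) ht j).deriv, hρen t, ← hcdef]
    rw [heq.deriv_eq, hkey.deriv]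
    simp only [hρ0, Function.update_eq_self, Pi.mul_apply]
    simp only [phiS, ← hrdef, ← hcdef]
    exact main_alg ε μ c r δ (x i) (y i) (x j) (y j) s
      (by rw [hcdef]; exact Real.sq_sqrt hεμ) hr.ne'
  · -- bound for Q2
    apply key
    calc |ε * μ * (x i - y i) * (x j - y j) / r ^ 2|
        = ε * μ * |x i - y i| * |x j - y j| / r ^ 2 := by
          rw [_root_.abs_div, _root_.abs_of_pos (pow_pos hr 2), _root_.abs_mul, _root_.abs_mul, _root_.abs_mul,
            _root_.abs_of_pos hε, _root_.abs_of_pos hμ]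
      _ ≤ ε * μ * r * r / r ^ 2 := by
          gcongr
          all_goals first | exact habs i | exact habs j
      _ = ε * μ := by field_simp [hr.ne']
      _ ≤ (ε * μ + 4 * c + 4) * 1 := by nlinarith
      _ ≤ (ε * μ + 4 * c + 4) * (1 + r⁻¹ + (r⁻¹)^2) := by
          have hri : 0 ≤ r⁻¹ := (inv_pos.mpr hr).le
          gcongr
          all_goals nlinarith [sq_nonneg r⁻¹]
  · -- bound for Q1
    apply key
    calc |c * (3 * (x i - y i) * (x j - y j) / r ^ 3 - δ / r)|
        = c * |3 * (x i - y i) * (x j - y j) / r ^ 3 - δ / r| := by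
          rw [_root_.abs_mul, _root_.abs_of_pos hc0]
      _ ≤ c * (|3 * (x i - y i) * (x j - y j) / r ^ 3| + |δ / r|) := by
          gcongr
          all_goals exact _root_.abs_sub _ _
      _ = c * (3 * |x i - y i| * |x j - y j| / r ^ 3 + δ / r) := by
          rw [_root_.abs_div, _root_.abs_of_pos (pow_pos hr 3), _root_.abs_div, _root_.abs_of_pos hr,
            _root_.abs_of_nonneg hδ0, _root_.abs_mul, _root_.abs_mul]
          norm_num
      _ ≤ c * (3 * r * r / r ^ 3 + 1 / r) := by
          gcongr
          all_goals first | exact habs i | exact habs j | exact hδ1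
      _ = 4 * c * r⁻¹ := by field_simp [hr.ne']; ring
      _ ≤ (ε * μ + 4 * c + 4) * r⁻¹ := by
          have hri : 0 ≤ r⁻¹ := (inv_pos.mpr hr).le
          gcongr
          all_goals nlinarith
      _ ≤ (ε * μ + 4 * c + 4) * (1 + r⁻¹ + (r⁻¹)^2) := by
          gcongr
          all_goals nlinarith [sq_nonneg r⁻¹, (inv_pos.mpr hr).le]
  · -- bound for Q0
    apply key
    calc |3 * (x i - y i) * (x j - y j) / r ^ 4 - δ / r ^ 2|
        ≤ |3 * (x i - y i) * (x j - y j) / r ^ 4| + |δ / r ^ 2| := _root_.abs_sub _ _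
      _ = 3 * |x i - y i| * |x j - y j| / r ^ 4 + δ / r ^ 2 := by
          rw [_root_.abs_div, _root_.abs_of_pos (pow_pos hr 4), _root_.abs_div, _root_.abs_of_pos (pow_pos hr 2),
            _root_.abs_of_nonneg hδ0, _root_.abs_mul, _root_.abs_mul]
          norm_num
      _ ≤ 3 * r * r / r ^ 4 + 1 / r ^ 2 := by
          gcongr
          all_goals first | exact habs i | exact habs j | exact hδ1
      _ = 4 * (r⁻¹)^2 := by field_simp [hr.ne']; ring
      _ ≤ (ε * μ + 4 * c + 4) * (r⁻¹)^2 := by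
          have : (0:ℝ) ≤ (r⁻¹)^2 := sq_nonneg _
          gcongr
          all_goals nlinarith
      _ ≤ (ε * μ + 4 * c + 4) * (1 + r⁻¹ + (r⁻¹)^2) := by
          gcongr
          all_goals nlinarith [sq_nonneg r⁻¹, (inv_pos.mpr hr).le]
end
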